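/- arXiv:0901.4640 — 2 statements merged into one kernel-verified Lean document; each statement's English description precedes it below -/
import Mathlib

section
/- Let (Σ,σ) be a finitely primitive Markov subshift on a countable alphabet and let A : Σ → ℝ be a locally Hölder continuous potential such that the Ruelle operator applied to the constant function 1 is uniformly bounded, i.e. sup_{x∈Σ} Σ_{y : σ(y)=x} e^{A(y)} < ∞. Then A is coercive, that is, lim_{i→∞} sup A|_{[i]} = −∞. -/
open MeasureTheory Filter Topology Set

/-- Membership in the Markov shift: admissible transitions at every coordinate. -/
def InShift (M : ℕ → ℕ → Bool) (x : ℕ → ℕ) : Prop := ∀ j, M (x j) (x (j+1)) = true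

/-- The one-sided countable Markov shift `Σ` associated to the transition matrix `M`,
as a subtype of `ℕ → ℕ` (with the product topology, which is the topology induced by
the metric `d(x,y) = λ^{min{j : x_j ≠ y_j}}`). -/
abbrev ShiftSpace (M : ℕ → ℕ → Bool) := {x : ℕ → ℕ // InShift M x}

/-- The left shift map `σ`. -/
def shiftMap (M : ℕ → ℕ → Bool) (x : ShiftSpace M) : ShiftSpace M :=
  ⟨fun j => x.1 (j+1), fun j => x.2 (j+1)⟩

/-- `Agree M k x y` means the points `x, y` coincide on the first `k` coordinates;
for `k ≥ 1` this is exactly `d(x,y) ≤ λ^k` for the metric of the paper. -/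
def Agree (M : ℕ → ℕ → Bool) (k : ℕ) (x y : ShiftSpace M) : Prop :=
  ∀ j < k, x.1 j = y.1 j

/-- The sets `B_n` of symbols admitting admissible words of length `n+1` starting at them. -/
def BSet (M : ℕ → ℕ → Bool) : ℕ → Set ℕ
  | 0 => {i | ∃ j, M i j = true}
  | n+1 => {i | ∃ j ∈ BSet M n, M i j = true}

/-- `⋂_{n ≥ 0} B_n`. -/
def BInf (M : ℕ → ℕ → Bool) : Set ℕ := ⋂ n, BSet M n

/-- `M` is primitive with connecting set `F` and connection length `K₀`: any two symbols
of `⋂ B_n` can be joined by an admissible word of length `K₀` with all letters in `F`. -/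
def Primitive (M : ℕ → ℕ → Bool) (F : Set ℕ) (K₀ : ℕ) : Prop :=
  ∀ i ∈ BInf M, ∀ j ∈ BInf M, ∃ p : ℕ → ℕ,
    p 0 = i ∧ p (K₀ + 1) = j ∧ (∀ t, 1 ≤ t → t ≤ K₀ → p t ∈ F) ∧
    (∀ t ≤ K₀, M (p t) (p (t+1)) = true)

/-- `A` is locally Hölder continuous with constant `H`:
`Var_k(A) ≤ H ⬝ λ^k` for every `k ≥ 1`. -/
def LocHolder (M : ℕ → ℕ → Bool) (lam H : ℝ) (A : ShiftSpace M → ℝ) : Prop :=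
  ∀ k : ℕ, 1 ≤ k → ∀ x y : ShiftSpace M, Agree M k x y → A x - A y ≤ H * lam ^ k

/-- `A` is coercive: `sup A|_{[i]} → -∞` as `i → ∞`. -/
def Coercive (M : ℕ → ℕ → Bool) (A : ShiftSpace M → ℝ) : Prop :=
  ∀ C : ℝ, ∃ N : ℕ, ∀ i : ℕ, N ≤ i → ∀ x : ShiftSpace M, x.1 0 = i → A x ≤ C

/-- The union of cylinders `⋃_{i ∈ F} [i]`. -/
def FCyl (M : ℕ → ℕ → Bool) (F : Set ℕ) : Set (ShiftSpace M) := {x | x.1 0 ∈ F}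

/-- `μ` is a `σ`-invariant Borel probability measure. -/
def InvProb (M : ℕ → ℕ → Bool) (μ : Measure (ShiftSpace M)) : Prop :=
  IsProbabilityMeasure μ ∧ μ.map (shiftMap M) = μ

/-- The ergodic maximizing value `β_A = sup {∫ A dμ : μ ∈ M_σ}`. -/
noncomputable def betaA (M : ℕ → ℕ → Bool) (A : ShiftSpace M → ℝ) : ℝ :=
  sSup {r | ∃ μ : Measure (ShiftSpace M), InvProb M μ ∧ Integrable A μ ∧ ∫ x, A x ∂μ = r}

/-- The compact subshift `Σ_I` on the finite alphabet `{0, …, I}`. -/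
def SpaceI (M : ℕ → ℕ → Bool) (I : ℕ) : Set (ShiftSpace M) := {x | ∀ j, x.1 j ≤ I}

/-- `β_A(I) = max {∫ A dμ : μ ∈ M_σ, supp μ ⊆ Σ_I}`. -/
noncomputable def betaAI (M : ℕ → ℕ → Bool) (A : ShiftSpace M → ℝ) (I : ℕ) : ℝ :=
  sSup {r | ∃ μ : Measure (ShiftSpace M), InvProb M μ ∧ μ (SpaceI M I) = 1 ∧
    Integrable A μ ∧ ∫ x, A x ∂μ = r}

/-- Birkhoff sum `S_k A`. -/
noncomputable def birkhoff (M : ℕ → ℕ → Bool) (A : ShiftSpace M → ℝ) (k : ℕ)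
    (x : ShiftSpace M) : ℝ :=
  ∑ j ∈ Finset.range k, A ((shiftMap M)^[j] x)

/-- The `k`-th variation `Var_k(A)`. -/
noncomputable def VarK (M : ℕ → ℕ → Bool) (A : ShiftSpace M → ℝ) (k : ℕ) : ℝ :=
  sSup {r | ∃ x y : ShiftSpace M, Agree M k x y ∧ A x - A y = r}

/-- `Var(A) = ∑_{k ≥ 1} Var_k(A)`. -/
noncomputable def VarSum (M : ℕ → ℕ → Bool) (A : ShiftSpace M → ℝ) : ℝ :=
  ∑' k : ℕ, VarK M A (k + 1)

/-- `sup A`. -/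
noncomputable def supA (M : ℕ → ℕ → Bool) (A : ShiftSpace M → ℝ) : ℝ :=
  sSup (Set.range A)

/-- `inf A|_{⋃_{i ∈ F} [i]}`. -/
noncomputable def infF (M : ℕ → ℕ → Bool) (F : Set ℕ) (A : ShiftSpace M → ℝ) : ℝ :=
  sInf (A '' FCyl M F)

/-- The defining set for `u_A(x)`: all values `S_k(A - β_A)(y)` with `σ^k(y) = x`. -/
noncomputable def uASet (M : ℕ → ℕ → Bool) (A : ShiftSpace M → ℝ) (x : ShiftSpace M) :
    Set ℝ :=
  {r | ∃ (k : ℕ) (y : ShiftSpace M), (shiftMap M)^[k] y = x ∧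
    birkhoff M A k y - k * betaA M A = r}

/-- The candidate minimal sub-action
`u_A(x) = sup {S_k(A - β_A)(y) : k ≥ 0, σ^k(y) = x}`. -/
noncomputable def uA (M : ℕ → ℕ → Bool) (A : ShiftSpace M → ℝ) (x : ShiftSpace M) : ℝ :=
  sSup (uASet M A x)

/-- The non-wandering set `Ω(A, I)` with respect to `A|_{Σ_I}`. -/
def NonWandering (M : ℕ → ℕ → Bool) (A : ShiftSpace M → ℝ) (I : ℕ) :
    Set (ShiftSpace M) :=
  {x | x ∈ SpaceI M I ∧ ∀ ε : ℝ, 0 < ε → ∀ m : ℕ,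
    ∃ y ∈ SpaceI M I, ∃ n : ℕ, 1 ≤ n ∧ Agree M m x y ∧
      Agree M m x ((shiftMap M)^[n] y) ∧
      |birkhoff M A n y - n * betaAI M A I| < ε}

/-!
If `A` were not coercive, there would be infinitely many symbols `i` whose cylinder contains a
point where `A > B`. Primitivity joins each such symbol, through a word of length `K₀` in the
finite set `F`, to a fixed point `z`, producing infinitely many distinct preimages `y` of `z`
under `σ^(K₀+1)` whose Birkhoff sums `S_{K₀+1} A(y)` are bounded below uniformly: local Hölder
continuity controls `A` on a cylinder, and `A` is bounded below on the finitely many cylinders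
over `F`. This contradicts `L_A^{K₀+1} 1 (z) ≤ ‖L_A 1‖_∞^{K₀+1}`.
-/

section ShiftSpace

variable {M : ℕ → ℕ → Bool}

lemma shiftMap_iterate_apply (k : ℕ) (x : ShiftSpace M) (j : ℕ) :
    ((shiftMap M)^[k] x).1 j = x.1 (j + k) := by
  induction k generalizing j with
  | zero => rfl
  | succ k ih =>
    rw [Function.iterate_succ_apply']
    exact (ih (j + 1)).trans (congrArg x.1 (by omega))

lemma mem_BSet (n : ℕ) (x : ShiftSpace M) : x.1 0 ∈ BSet M n := by
  induction n generalizing x with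
  | zero => exact ⟨x.1 1, x.2 0⟩
  | succ n ih => exact ⟨x.1 1, ih (shiftMap M x), x.2 0⟩

lemma mem_BInf (x : ShiftSpace M) : x.1 0 ∈ BInf M :=
  Set.mem_iInter.mpr fun n => mem_BSet n x

lemma agree_one_iff {x y : ShiftSpace M} : Agree M 1 x y ↔ x.1 0 = y.1 0 :=
  ⟨fun h => h 0 Nat.one_pos, fun h j hj => by rwa [Nat.lt_one_iff.mp hj]⟩

def prependWord (n : ℕ) (p : ℕ → ℕ) (z : ShiftSpace M)
    (hp : ∀ t < n, M (p t) (p (t + 1)) = true) (hpz : p n = z.1 0) : ShiftSpace M :=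
  ⟨fun j => if j < n then p j else z.1 (j - n), fun j => by
    dsimp only
    split_ifs with hj hj' hj'
    · exact hp j hj
    · obtain rfl : n = j + 1 := by omega
      simpa [hpz] using hp j hj
    · omega
    · rw [show j + 1 - n = j - n + 1 by omega]
      exact z.2 _⟩

variable {n : ℕ} {p : ℕ → ℕ} {z : ShiftSpace M}
  {hp : ∀ t < n, M (p t) (p (t + 1)) = true} {hpz : p n = z.1 0}

lemma prependWord_apply_of_lt {j : ℕ} (hj : j < n) :
    (prependWord n p z hp hpz).1 j = p j :=
  if_pos hj

lemma shiftMap_iterate_prependWord : (shiftMap M)^[n] (prependWord n p z hp hpz) = z := by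
  ext j
  rw [shiftMap_iterate_apply]
  exact (if_neg (by omega)).trans (congrArg z.1 (by omega))

end ShiftSpace

section Potential

variable {M : ℕ → ℕ → Bool} {A : ShiftSpace M → ℝ}

lemma birkhoff_succ (k : ℕ) (y : ShiftSpace M) :
    birkhoff M A (k + 1) y = A y + birkhoff M A k (shiftMap M y) := by
  simp only [birkhoff, Finset.sum_range_succ', Function.iterate_succ_apply,
    Function.iterate_zero_apply, add_comm]

lemma LocHolder.sub_le_of_apply_zero_eq {lam H : ℝ} (hA : LocHolder M lam H A)
    {x y : ShiftSpace M} (hxy : x.1 0 = y.1 0) : A x - A y ≤ H * lam := by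
  simpa using hA 1 le_rfl x y (agree_one_iff.mpr hxy)

lemma bddBelow_image_FCyl {c : ℝ} (hA : ∀ x y : ShiftSpace M, x.1 0 = y.1 0 → A x - A y ≤ c)
    {F : Set ℕ} (hF : F.Finite) : BddBelow (A '' FCyl M F) := by
  have hcyl : FCyl M F = ⋃ i ∈ F, {x : ShiftSpace M | x.1 0 = i} := by
    ext x
    simp [FCyl]
  rw [hcyl, Set.image_iUnion₂, hF.bddBelow_biUnion]
  intro i _
  rcases Set.eq_empty_or_nonempty {x : ShiftSpace M | x.1 0 = i} with he | ⟨x₀, hx₀⟩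
  · simp [he]
  · refine ⟨A x₀ - c, ?_⟩
    rintro _ ⟨x, hx, rfl⟩
    linarith [hA x₀ x (hx₀.trans hx.symm)]

section RuelleBound

variable {C : ℝ}
  (hL : ∀ x : ShiftSpace M, ∀ s : Finset {y : ShiftSpace M // shiftMap M y = x},
    ∑ y ∈ s, Real.exp (A y.1) ≤ C)
include hL

lemma sum_exp_le_of_forall_shiftMap_eq {w : ShiftSpace M} (s : Finset (ShiftSpace M))
    (hs : ∀ y ∈ s, shiftMap M y = w) : ∑ y ∈ s, Real.exp (A y) ≤ C := by
  classical
  rw [← Finset.sum_subtype_of_mem _ hs]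
  exact hL w _

/-- `L_A^k 1 ≤ C^k`, tested on finite sets of `k`-th preimages. -/
lemma sum_exp_birkhoff_le_pow (k : ℕ) {z : ShiftSpace M} (s : Finset (ShiftSpace M))
    (hs : ∀ y ∈ s, (shiftMap M)^[k] y = z) :
    ∑ y ∈ s, Real.exp (birkhoff M A k y) ≤ C ^ k := by
  classical
  have hC : 0 ≤ C := by simpa using hL z ∅
  induction k generalizing s with
  | zero =>
    have hsub : s ⊆ {z} := fun y hy => by simpa using hs y hy
    calc ∑ y ∈ s, Real.exp (birkhoff M A 0 y)
        ≤ ∑ y ∈ {z}, Real.exp (birkhoff M A 0 y) :=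
          Finset.sum_le_sum_of_subset_of_nonneg hsub fun _ _ _ => (Real.exp_pos _).le
      _ = C ^ 0 := by simp [birkhoff]
  | succ k ih =>
    have hfiber (w) : ∑ y ∈ s with shiftMap M y = w, Real.exp (birkhoff M A (k + 1) y)
        ≤ C * Real.exp (birkhoff M A k w) := by
      calc ∑ y ∈ s with shiftMap M y = w, Real.exp (birkhoff M A (k + 1) y)
          = (∑ y ∈ s with shiftMap M y = w, Real.exp (A y)) * Real.exp (birkhoff M A k w) := by
            rw [Finset.sum_mul]
            refine Finset.sum_congr rfl fun y hy => ?_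
            rw [birkhoff_succ, (Finset.mem_filter.mp hy).2, Real.exp_add]
        _ ≤ C * Real.exp (birkhoff M A k w) :=
            mul_le_mul_of_nonneg_right (sum_exp_le_of_forall_shiftMap_eq hL _
              fun y hy => (Finset.mem_filter.mp hy).2) (Real.exp_pos _).le
    have himage : ∀ w ∈ s.image (shiftMap M), (shiftMap M)^[k] w = z := by
      rintro _ hw
      obtain ⟨y, hy, rfl⟩ := Finset.mem_image.mp hw
      rw [← Function.iterate_succ_apply]
      exact hs y hy
    calc ∑ y ∈ s, Real.exp (birkhoff M A (k + 1) y)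
        = ∑ w ∈ s.image (shiftMap M), ∑ y ∈ s with shiftMap M y = w,
            Real.exp (birkhoff M A (k + 1) y) :=
          (Finset.sum_fiberwise_of_maps_to (fun y hy => Finset.mem_image_of_mem _ hy) _).symm
      _ ≤ ∑ w ∈ s.image (shiftMap M), C * Real.exp (birkhoff M A k w) :=
          Finset.sum_le_sum fun w _ => hfiber w
      _ ≤ C * C ^ k := by
          rw [← Finset.mul_sum]
          exact mul_le_mul_of_nonneg_left (ih _ himage) hC
      _ = C ^ (k + 1) := (pow_succ' C k).symm

lemma finite_setOf_birkhoff_ge (k : ℕ) (z : ShiftSpace M) (b : ℝ) :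
    {y | (shiftMap M)^[k] y = z ∧ b ≤ birkhoff M A k y}.Finite := by
  by_contra hinf
  obtain ⟨t, hts, htcard⟩ := Set.Infinite.exists_subset_card_eq hinf (⌊C ^ k / Real.exp b⌋₊ + 1)
  have hsum : (t.card : ℝ) * Real.exp b ≤ C ^ k := by
    calc (t.card : ℝ) * Real.exp b = ∑ _y ∈ t, Real.exp b := by simp
      _ ≤ ∑ y ∈ t, Real.exp (birkhoff M A k y) :=
          Finset.sum_le_sum fun y hy => Real.exp_le_exp.mpr (hts hy).2
      _ ≤ C ^ k := sum_exp_birkhoff_le_pow hL k t fun y hy => (hts hy).1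
  have hlt : C ^ k / Real.exp b < t.card := by
    rw [htcard]
    exact_mod_cast Nat.lt_floor_add_one _
  rw [← le_div_iff₀ (Real.exp_pos b)] at hsum
  exact hlt.not_ge hsum

end RuelleBound

lemma exists_shiftMap_iterate_eq_birkhoff_ge {F : Set ℕ} {K₀ : ℕ} (hprim : Primitive M F K₀)
    {c m : ℝ} (hA : ∀ x y : ShiftSpace M, x.1 0 = y.1 0 → A x - A y ≤ c)
    (hm : ∀ w ∈ FCyl M F, m ≤ A w) (x z : ShiftSpace M) :
    ∃ y, y.1 0 = x.1 0 ∧ (shiftMap M)^[K₀ + 1] y = z ∧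
      A x - c + K₀ * m ≤ birkhoff M A (K₀ + 1) y := by
  obtain ⟨p, hp0, hpz, hpF, hpM⟩ := hprim _ (mem_BInf x) _ (mem_BInf z)
  set y := prependWord (K₀ + 1) p z (fun t ht => hpM t (by omega)) hpz
  have hy0 : y.1 0 = x.1 0 := (prependWord_apply_of_lt K₀.succ_pos).trans hp0
  have hF (t : ℕ) (ht : t < K₀) : m ≤ A ((shiftMap M)^[t + 1] y) := by
    apply hm
    change ((shiftMap M)^[t + 1] y).1 0 ∈ F
    rw [shiftMap_iterate_apply, zero_add, prependWord_apply_of_lt (by omega)]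
    exact hpF (t + 1) (by omega) (by omega)
  refine ⟨y, hy0, shiftMap_iterate_prependWord, ?_⟩
  calc A x - c + K₀ * m
      ≤ A y + ∑ _t ∈ Finset.range K₀, m := by
        simp only [Finset.sum_const, Finset.card_range, nsmul_eq_mul]
        linarith [hA x y hy0.symm]
    _ ≤ A y + ∑ t ∈ Finset.range K₀, A ((shiftMap M)^[t + 1] y) := by
        gcongr with t ht
        exact hF t (Finset.mem_range.mp ht)
    _ = birkhoff M A (K₀ + 1) y := by
        simp only [birkhoff, Finset.sum_range_succ', Function.iterate_zero_apply, add_comm]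

lemma coercive_of_forall_finite
    (h : ∀ B : ℝ, {i | ∃ x : ShiftSpace M, x.1 0 = i ∧ B < A x}.Finite) : Coercive M A := by
  intro B
  obtain ⟨N, hN⟩ := (h B).bddAbove
  refine ⟨N + 1, fun i hi x hx => not_lt.mp fun hlt => ?_⟩
  have := hN ⟨x, hx, hlt⟩
  omega

end Potential

theorem ruelle_bounded_implies_coercive_general
    (M : ℕ → ℕ → Bool) (F : Set ℕ) (K₀ : ℕ) (lam H : ℝ)
    (hprim : Primitive M F K₀) (hFfin : F.Finite)
    (A : ShiftSpace M → ℝ)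
    (hhold : LocHolder M lam H A)
    (C : ℝ)
    (hL : ∀ x : ShiftSpace M, ∀ s : Finset {y : ShiftSpace M // shiftMap M y = x},
      ∑ y ∈ s, Real.exp (A y.1) ≤ C) :
    Coercive M A := by
  have hvar := fun (x y : ShiftSpace M) (hxy : x.1 0 = y.1 0) => hhold.sub_le_of_apply_zero_eq hxy
  obtain ⟨m, hm⟩ := bddBelow_image_FCyl hvar hFfin
  refine coercive_of_forall_finite fun B => ?_
  rcases isEmpty_or_nonempty (ShiftSpace M) with hempty | ⟨⟨z⟩⟩
  · simp
  refine ((finite_setOf_birkhoff_ge hL (K₀ + 1) z (B - H * lam + K₀ * m)).image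
    (fun y => y.1 0)).subset ?_
  rintro _ ⟨x, rfl, hx⟩
  obtain ⟨y, hy0, hyz, hy⟩ :=
    exists_shiftMap_iterate_eq_birkhoff_ge hprim hvar (fun w hw => hm ⟨w, hw, rfl⟩) x z
  exact ⟨y, ⟨hyz, by linarith⟩, hy0⟩

/-- for a finitely primitive shift and a locally Hölder potential `A`,
if `‖L_A 1‖_∞ < ∞` (i.e. the sums `∑_{σ(y)=x} e^{A(y)}` are uniformly bounded, expressed
through finite partial sums), then `A` is coercive. -/
theorem ruelle_bounded_implies_coercive
    (M : ℕ → ℕ → Bool) (F : Set ℕ) (K₀ : ℕ) (lam H : ℝ)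
    (hlam₀ : 0 < lam) (hlam₁ : lam < 1) (hH : 0 < H)
    (hprim : Primitive M F K₀) (hFfin : F.Finite)
    (A : ShiftSpace M → ℝ)
    (hhold : LocHolder M lam H A)
    (C : ℝ)
    (hL : ∀ x : ShiftSpace M, ∀ s : Finset {y : ShiftSpace M // shiftMap M y = x},
      ∑ y ∈ s, Real.exp (A y.1) ≤ C) :
    Coercive M A :=
  ruelle_bounded_implies_coercive_general M F K₀ lam H hprim hFfin A hhold C hL
end

section
/- Let (Σ,σ) be a primitive Markov subshift on a countable alphabet, A : Σ → ℝ a bounded above continuous potential, and u : Σ → ℝ a continuous sub-action for A. If μ ∈ M_σ is an A-maximizing probability and A + u − u∘σ is μ-integrable, then the support of μ is contained in the closed set (A + u − u∘σ − β_A)^{-1}(0) = {x ∈ Σ : A(x) + u(x) − u(σ(x)) = β_A}. -/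
open MeasureTheory Filter Topology Set

/-- Truncation of a real number to `[-N, N]`. -/
noncomputable def st18Trunc (N : ℝ) (t : ℝ) : ℝ := max (min t N) (-N)

lemma st18Trunc_lip (N a b : ℝ) : |st18Trunc N a - st18Trunc N b| ≤ |a - b| := by
  refine (abs_max_sub_max_le_abs _ _ _).trans ?_
  have := abs_min_sub_min_le_max a N b N
  simpa using this

lemma st18Trunc_eq (N t : ℝ) (h : |t| ≤ N) : st18Trunc N t = t := by
  rw [abs_le] at h
  simp [st18Trunc, min_eq_left h.2, max_eq_left h.1]

/-- if `u` is a continuous sub-action for a bounded above continuous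
potential `A` and `μ` is `A`-maximizing (with `A + u - u∘σ` μ-integrable), then `μ` is
supported in the closed set where `A + u - u∘σ = β_A`. -/
theorem maximizing_supported_in_contact_set
    (M : ℕ → ℕ → Bool) (F : Set ℕ) (K₀ : ℕ)
    (hprim : Primitive M F K₀)
    (A : ShiftSpace M → ℝ) (hA : Continuous A) (hbdd : BddAbove (Set.range A))
    (u : ShiftSpace M → ℝ) (hu : Continuous u)
    (hsub : ∀ x, A x + u x - u (shiftMap M x) ≤ betaA M A)
    (μ : Measure (ShiftSpace M)) (hμ : InvProb M μ)
    (hintA : Integrable A μ) (hmax : ∫ x, A x ∂μ = betaA M A)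
    (hintu : Integrable (fun x => A x + u x - u (shiftMap M x)) μ) :
    μ {x : ShiftSpace M | A x + u x - u (shiftMap M x) ≠ betaA M A} = 0 := by
  haveI : BorelSpace (ShiftSpace M) := Subtype.borelSpace {x | InShift M x}
  obtain ⟨hprob, hmap⟩ := hμ
  have hσc : Continuous (shiftMap M) := by
    apply Continuous.subtype_mk
    exact continuous_pi fun j => (continuous_apply (j+1)).comp continuous_subtype_val
  have hσm : Measurable (shiftMap M) := hσc.measurable
  -- f = u - u ∘ σ is integrable
  have hintf : Integrable (fun x => u x - u (shiftMap M x)) μ := by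
    have := hintu.sub hintA
    refine this.congr (Filter.Eventually.of_forall fun x => ?_)
    simp only [Pi.sub_apply]; ring
  -- ∫ f dμ = 0 by truncation + invariance + dominated convergence
  have key : ∫ x, (u x - u (shiftMap M x)) ∂μ = 0 := by
    set f : ℕ → ShiftSpace M → ℝ :=
      fun N x => st18Trunc N (u x) - st18Trunc N (u (shiftMap M x)) with hf
    have htrc : ∀ N : ℝ, Continuous (st18Trunc N) := fun N => by
      unfold st18Trunc; fun_prop
    have hFm : ∀ N : ℕ, AEStronglyMeasurable (f N) μ :=
      fun N => (((htrc N).comp hu).sub (((htrc N).comp hu).comp hσc)).aestronglyMeasurable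
    -- each ∫ f N = 0
    have hint0 : ∀ N : ℕ, ∫ x, f N x ∂μ = 0 := by
      intro N
      have hb : ∀ t : ℝ, |st18Trunc (N : ℝ) t| ≤ N := by
        intro t
        rw [abs_le, st18Trunc]
        constructor
        · exact le_max_right _ _
        · exact max_le (min_le_right _ _) (by simp)
      have hib : Integrable (fun x => st18Trunc (N:ℝ) (u x)) μ := by
        refine Integrable.mono' (integrable_const (N:ℝ)) 
          (((htrc N).comp hu).aestronglyMeasurable)
          (Filter.Eventually.of_forall fun x => ?_)
        simpa [Real.norm_eq_abs] using hb (u x)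
      have hib2 : Integrable (fun x => st18Trunc (N:ℝ) (u (shiftMap M x))) μ := by
        refine Integrable.mono' (integrable_const (N:ℝ)) 
          ((((htrc N).comp hu).comp hσc).aestronglyMeasurable)
          (Filter.Eventually.of_forall fun x => ?_)
        simpa [Real.norm_eq_abs] using hb (u (shiftMap M x))
      have hinv : ∫ x, st18Trunc (N:ℝ) (u (shiftMap M x)) ∂μ
          = ∫ x, st18Trunc (N:ℝ) (u x) ∂μ := by
        have h1 : ∫ y, st18Trunc (N:ℝ) (u y) ∂(μ.map (shiftMap M))
            = ∫ x, st18Trunc (N:ℝ) (u (shiftMap M x)) ∂μ :=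
          integral_map hσm.aemeasurable ((htrc (N:ℝ)).comp hu).aestronglyMeasurable
        rw [← h1, hmap]
      rw [hf]
      rw [integral_sub hib hib2, hinv, sub_self]
    -- dominated convergence
    have hlim : Tendsto (fun N : ℕ => ∫ x, f N x ∂μ) atTop
        (𝓝 (∫ x, (u x - u (shiftMap M x)) ∂μ)) := by
      refine tendsto_integral_of_dominated_convergence
        (fun x => |u x - u (shiftMap M x)|) hFm ?_ ?_ ?_
      · exact hintf.abs
      · intro N
        exact Filter.Eventually.of_forall fun x => by
          simpa [Real.norm_eq_abs, hf] using st18Trunc_lip (N:ℝ) (u x) (u (shiftMap M x))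
      · refine Filter.Eventually.of_forall fun x => ?_
        refine Tendsto.congr' ?_ tendsto_const_nhds
        filter_upwards [eventually_ge_atTop (⌈max |u x| |u (shiftMap M x)|⌉₊)] with N hN
        have hN' : max |u x| |u (shiftMap M x)| ≤ (N : ℝ) :=
          (Nat.le_ceil _).trans (by exact_mod_cast hN)
        rw [hf]
        simp only
        rw [st18Trunc_eq _ _ ((le_max_left _ _).trans hN'),
          st18Trunc_eq _ _ ((le_max_right _ _).trans hN')]
    have h0 : Tendsto (fun _ : ℕ => (0:ℝ)) atTop
        (𝓝 (∫ x, (u x - u (shiftMap M x)) ∂μ)) := hlim.congr fun N => hint0 N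
    exact tendsto_nhds_unique h0 tendsto_const_nhds
  -- the nonnegative function g = β - (A + u - u∘σ) has zero integral
  set g : ShiftSpace M → ℝ := fun x => betaA M A - (A x + u x - u (shiftMap M x)) with hg
  have hgint : Integrable g μ := (integrable_const _).sub hintu
  have hgnn : 0 ≤ g := fun x => sub_nonneg.2 (hsub x)
  have hgi : ∫ x, g x ∂μ = 0 := by
    have : ∫ x, (A x + u x - u (shiftMap M x)) ∂μ = betaA M A := by
      have heq : (fun x => A x + u x - u (shiftMap M x))
          = fun x => A x + (u x - u (shiftMap M x)) := by funext x; ring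
      rw [heq, integral_add hintA hintf, key, add_zero, hmax]
    rw [hg]
    rw [integral_sub (integrable_const _) hintu, this, integral_const]
    simp
  have hae : g =ᵐ[μ] 0 := (integral_eq_zero_iff_of_nonneg hgnn hgint).1 hgi
  have hset : {x : ShiftSpace M | A x + u x - u (shiftMap M x) ≠ betaA M A}
      ⊆ {x | ¬ g x = 0} := by
    intro x hx hgx
    exact hx (by rw [hg] at hgx; simp only [sub_eq_zero] at hgx; exact hgx.symm)
  exact measure_mono_null hset hae
end
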